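/- arXiv:1310.4785 — 2 statements merged into one kernel-verified Lean document; each statement's English description precedes it below -/
import Mathlib

section
/- The functions φ₁ and φ₃ of the quadrilateral Lin–Tobiska–Zhou (QLTZ) element are dual to the edge-average degrees of freedom on e₁ and e₃ respectively: ⨍_Q φ₁ = 0, ⨍_{e₁}φ₁ = 1, ⨍_{e₂}φ₁ = ⨍_{e₃}φ₁ = ⨍_{e₄}φ₁ = 0; and ⨍_Q φ₃ = 0, ⨍_{e₃}φ₃ = 1, ⨍_{e₁}φ₃ = ⨍_{e₂}φ₃ = ⨍_{e₄}φ₃ = 0. That is, dᵢ(φ₁) = δ_{i1} and dᵢ(φ₃) = δ_{i3} for i = 0,…,4. -/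
open MeasureTheory

noncomputable section

/-- Vertex a₁ of the reference convex quadrilateral (points written as (η, ξ)). -/
def a1 (α β : ℝ) : ℝ × ℝ := (-1 - α, 1 - β)

/-- Vertex a₂. -/
def a2 (α β : ℝ) : ℝ × ℝ := (-1 + α, -1 + β)

/-- Vertex a₃. -/
def a3 (α β : ℝ) : ℝ × ℝ := (1 - α, -1 - β)

/-- Vertex a₄. -/
def a4 (α β : ℝ) : ℝ × ℝ := (1 + α, 1 + β)

/-- The reference convex quadrilateral Q = conv{a₁, a₂, a₃, a₄}. -/
def Quad (α β : ℝ) : Set (ℝ × ℝ) :=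
  convexHull ℝ {a1 α β, a2 α β, a3 α β, a4 α β}

/-- Average of `u` over the segment from `P` to `R`:
    ⨍ u = ∫_{t ∈ [0,1]} u((1−t)P + tR) dt. -/
def edgeAvg (P R : ℝ × ℝ) (u : ℝ × ℝ → ℝ) : ℝ :=
  ∫ t in (0:ℝ)..1, u ((1 - t) • P + t • R)

/-- Average of `u` over the quadrilateral Q: (∫_Q u dλ)/λ(Q). -/
def quadAvg (α β : ℝ) (u : ℝ × ℝ → ℝ) : ℝ :=
  (∫ p in Quad α β, u p) / (volume (Quad α β)).toReal

/-- The basis function φ₀ of the QLTZ element: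
φ₀ = −3(3ξ² + 3η² − 2αξ − 2βη − (4 + α² + β²))/(2(α² + β² + 3)),
with ξ(p) = p.2 and η(p) = p.1. -/
def phi0 (α β : ℝ) (p : ℝ × ℝ) : ℝ :=
  -3 * (3 * p.2 ^ 2 + 3 * p.1 ^ 2 - 2 * α * p.2 - 2 * β * p.1 - (4 + α ^ 2 + β ^ 2)) /
    (2 * (α ^ 2 + β ^ 2 + 3))

/-- φ₁ = −(3/4)ξ² + ((β−1)/2)η + (3+β²)/4 − ((β²−β+3)/6)φ₀. -/
def phi1 (α β : ℝ) (p : ℝ × ℝ) : ℝ :=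
  -(3 / 4) * p.2 ^ 2 + (β - 1) / 2 * p.1 + (3 + β ^ 2) / 4 -
    (β ^ 2 - β + 3) / 6 * phi0 α β p

/-- φ₂ = −(3/4)η² + ((α−1)/2)ξ + (3+α²)/4 − ((α²−α+3)/6)φ₀. -/
def phi2 (α β : ℝ) (p : ℝ × ℝ) : ℝ :=
  -(3 / 4) * p.1 ^ 2 + (α - 1) / 2 * p.2 + (3 + α ^ 2) / 4 -
    (α ^ 2 - α + 3) / 6 * phi0 α β p

/-- φ₃ = −(3/4)ξ² + ((β+1)/2)η + (3+β²)/4 − ((β²+β+3)/6)φ₀. -/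
def phi3 (α β : ℝ) (p : ℝ × ℝ) : ℝ :=
  -(3 / 4) * p.2 ^ 2 + (β + 1) / 2 * p.1 + (3 + β ^ 2) / 4 -
    (β ^ 2 + β + 3) / 6 * phi0 α β p

/-- φ₄ = −(3/4)η² + ((α+1)/2)ξ + (3+α²)/4 − ((α²+α+3)/6)φ₀. -/
def phi4 (α β : ℝ) (p : ℝ × ℝ) : ℝ :=
  -(3 / 4) * p.1 ^ 2 + (α + 1) / 2 * p.2 + (3 + α ^ 2) / 4 -
    (α ^ 2 + α + 3) / 6 * phi0 α β p


/-!
φ₁ and φ₃ are quadratic polynomials, and on quadratics every degree of freedom is computed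
exactly by a quadrature rule with nodes at vertices and edge midpoints: Simpson's rule on each
edge, and on each of the two triangles a₁a₂a₃, a₃a₄a₁ into which the diagonal a₁a₃ cuts Q, the
edge-midpoint rule ∫_T u = |T| / 3 · (sum of u at the three edge midpoints). The latter follows from
Fubini and Simpson's rule on the reference triangle and an affine change of variables. The claimed
values thereby reduce to identities between rational functions of α and β.
-/

open Set

def IsQuadratic (u : ℝ × ℝ → ℝ) : Prop :=
  ∃ a b c d e f : ℝ, ∀ p : ℝ × ℝ,
    u p = a * p.1 ^ 2 + b * p.1 * p.2 + c * p.2 ^ 2 + d * p.1 + e * p.2 + f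

namespace IsQuadratic

variable {u : ℝ × ℝ → ℝ}

theorem continuous (hu : IsQuadratic u) : Continuous u := by
  obtain ⟨a, b, c, d, e, f, hu⟩ := hu
  rw [show u = _ from funext hu]
  fun_prop

theorem comp_add_smul (hu : IsQuadratic u) (v w₁ w₂ : ℝ × ℝ) :
    IsQuadratic fun p => u (v + p.1 • w₁ + p.2 • w₂) := by
  obtain ⟨a, b, c, d, e, f, hu⟩ := hu
  refine ⟨a * w₁.1 ^ 2 + b * w₁.1 * w₁.2 + c * w₁.2 ^ 2,
    2 * a * w₁.1 * w₂.1 + b * (w₁.1 * w₂.2 + w₂.1 * w₁.2) + 2 * c * w₁.2 * w₂.2,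
    a * w₂.1 ^ 2 + b * w₂.1 * w₂.2 + c * w₂.2 ^ 2,
    2 * a * v.1 * w₁.1 + b * (v.1 * w₁.2 + v.2 * w₁.1) + 2 * c * v.2 * w₁.2 + d * w₁.1 + e * w₁.2,
    2 * a * v.1 * w₂.1 + b * (v.1 * w₂.2 + v.2 * w₂.1) + 2 * c * v.2 * w₂.2 + d * w₂.1 + e * w₂.2,
    u v, fun p => ?_⟩
  simp only [hu, Prod.fst_add, Prod.snd_add, Prod.smul_fst, Prod.smul_snd, smul_eq_mul]
  ring

end IsQuadratic

theorem integral_cubic_eq_simpson {f : ℝ → ℝ} {c₃ c₂ c₁ c₀ : ℝ}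
    (hf : ∀ x, f x = c₃ * x ^ 3 + c₂ * x ^ 2 + c₁ * x + c₀) (a b : ℝ) :
    ∫ x in a..b, f x = (b - a) / 6 * (f a + 4 * f ((a + b) / 2) + f b) := by
  obtain rfl : f = fun x => c₃ * x ^ 3 + c₂ * x ^ 2 + c₁ * x + c₀ := funext hf
  have hF : ∀ x, HasDerivAt (fun x => c₃ * x ^ 4 / 4 + c₂ * x ^ 3 / 3 + c₁ * x ^ 2 / 2 + c₀ * x)
      (c₃ * x ^ 3 + c₂ * x ^ 2 + c₁ * x + c₀) x := fun x =>
    (((((hasDerivAt_pow 4 x).const_mul c₃).div_const 4).add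
      (((hasDerivAt_pow 3 x).const_mul c₂).div_const 3)).add
      (((hasDerivAt_pow 2 x).const_mul c₁).div_const 2)).add
      ((hasDerivAt_id x).const_mul c₀) |>.congr_deriv (by norm_num; ring)
  rw [intervalIntegral.integral_eq_sub_of_hasDerivAt (fun x _ => hF x)
    (Continuous.intervalIntegrable (by fun_prop) _ _)]
  ring

theorem IsQuadratic.edgeAvg_eq_simpson {u : ℝ × ℝ → ℝ} (hu : IsQuadratic u) (P R : ℝ × ℝ) :
    edgeAvg P R u = (u P + 4 * u (midpoint ℝ P R) + u R) / 6 := by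
  obtain ⟨a, b, c, d, e, f, hu⟩ := hu
  have hline : ∀ t : ℝ, u ((1 - t) • P + t • R) =
      0 * t ^ 3 + (a * (R.1 - P.1) ^ 2 + b * (R.1 - P.1) * (R.2 - P.2) + c * (R.2 - P.2) ^ 2) * t ^ 2
        + (2 * a * P.1 * (R.1 - P.1) + b * (P.1 * (R.2 - P.2) + P.2 * (R.1 - P.1))
          + 2 * c * P.2 * (R.2 - P.2) + d * (R.1 - P.1) + e * (R.2 - P.2)) * t + u P := by
    intro t
    simp only [hu, Prod.fst_add, Prod.snd_add, Prod.smul_fst, Prod.smul_snd, smul_eq_mul]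
    ring
  rw [edgeAvg, integral_cubic_eq_simpson hline]
  simp only [hu, midpoint_eq_smul_add, Prod.fst_add, Prod.snd_add, Prod.smul_fst,
    Prod.smul_snd, smul_eq_mul, invOf_eq_inv]
  ring

def stdTriangle : Set (ℝ × ℝ) := {p | 0 ≤ p.1 ∧ 0 ≤ p.2 ∧ p.1 + p.2 ≤ 1}

theorem isClosed_stdTriangle : IsClosed stdTriangle :=
  (isClosed_le continuous_const continuous_fst).inter <|
    (isClosed_le continuous_const continuous_snd).inter <|
      isClosed_le (continuous_fst.add continuous_snd) continuous_const

theorem isCompact_stdTriangle : IsCompact stdTriangle :=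
  (isCompact_Icc (a := ((0 : ℝ), (0 : ℝ))) (b := (1, 1))).of_isClosed_subset
    isClosed_stdTriangle fun p ⟨h₁, h₂, h₃⟩ => by
      simp only [mem_Icc, Prod.le_def]
      exact ⟨⟨h₁, h₂⟩, by linarith, by linarith⟩

theorem convex_stdTriangle : Convex ℝ stdTriangle := by
  rintro p ⟨hp₁, hp₂, hp₃⟩ q ⟨hq₁, hq₂, hq₃⟩ s t hs ht hst
  simp only [stdTriangle, mem_ofPred_eq, Prod.fst_add, Prod.snd_add, Prod.smul_fst,
    Prod.smul_snd, smul_eq_mul]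
  refine ⟨by positivity, by positivity, ?_⟩
  nlinarith

theorem integral_stdTriangle_eq_iterated {u : ℝ × ℝ → ℝ} (hu : Continuous u) :
    ∫ p in stdTriangle, u p = ∫ x in (0 : ℝ)..1, ∫ y in (0 : ℝ)..(1 - x), u (x, y) := by
  have hslice : ∀ x, (∫ y, stdTriangle.indicator u (x, y)) =
      (Icc 0 1).indicator (fun x => ∫ y in (0 : ℝ)..(1 - x), u (x, y)) x := by
    intro x
    by_cases hx : x ∈ Icc (0 : ℝ) 1
    · rw [indicator_of_mem hx, intervalIntegral.integral_of_le (by linarith [hx.2]),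
        ← integral_Icc_eq_integral_Ioc, ← integral_indicator measurableSet_Icc]
      congr 1 with y
      simp only [indicator_apply, stdTriangle, mem_ofPred_eq, mem_Icc, hx.1, true_and]
      congr 1
      exact propext ⟨fun h => ⟨h.1, by linarith⟩, fun h => ⟨h.1, by linarith⟩⟩
    · rw [indicator_of_notMem hx]
      refine integral_eq_zero_of_ae (.of_forall fun y => indicator_of_notMem ?_ _)
      rintro ⟨h₁, h₂, h₃⟩
      exact hx ⟨h₁, by linarith⟩
  rw [← integral_indicator isClosed_stdTriangle.measurableSet, Measure.volume_eq_prod,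
    integral_prod _ ?_]
  · simp only [hslice]
    rw [integral_indicator measurableSet_Icc, integral_Icc_eq_integral_Ioc,
      ← intervalIntegral.integral_of_le zero_le_one]
  · rw [← Measure.volume_eq_prod, integrable_indicator_iff isClosed_stdTriangle.measurableSet]
    exact hu.continuousOn.integrableOn_compact isCompact_stdTriangle

theorem IsQuadratic.integral_stdTriangle {u : ℝ × ℝ → ℝ} (hu : IsQuadratic u) :
    ∫ p in stdTriangle, u p = (u (1 / 2, 0) + u (1 / 2, 1 / 2) + u (0, 1 / 2)) / 6 := by
  obtain ⟨a, b, c, d, e, f, hu'⟩ := id hu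
  have hinner : ∀ x : ℝ, ∫ y in (0 : ℝ)..(1 - x), u (x, y) =
      (-c / 3 + b / 2 - a) * x ^ 3 + (c - b + e / 2 + a - d) * x ^ 2
        + (-c + b / 2 - e + d - f) * x + (c / 3 + e / 2 + f) := by
    intro x
    rw [integral_cubic_eq_simpson (c₃ := 0) (c₂ := c) (c₁ := b * x + e)
      (c₀ := a * x ^ 2 + d * x + f) (fun y => by rw [hu']; ring)]
    simp only [hu']
    ring
  rw [integral_stdTriangle_eq_iterated hu.continuous, intervalIntegral.integral_congr
    (fun x _ => hinner x), integral_cubic_eq_simpson (fun x => rfl)]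
  simp only [hu']
  ring

/-- Twice the signed area of the triangle `a b c`: positive iff `a, b, c` are in counterclockwise
order. -/
def orient (a b c : ℝ × ℝ) : ℝ := (b.1 - a.1) * (c.2 - a.2) - (b.2 - a.2) * (c.1 - a.1)

theorem orient_rotate (a b c : ℝ × ℝ) : orient a b c = orient b c a := by
  unfold orient; ring

theorem orient_swap (a b c : ℝ × ℝ) : orient a b c = -orient b a c := by
  unfold orient; ring

@[simp] theorem orient_self_left (a b : ℝ × ℝ) : orient a b a = 0 := by
  unfold orient; ring

@[simp] theorem orient_self_right (a b : ℝ × ℝ) : orient a b b = 0 := by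
  unfold orient; ring

theorem convex_setOf_orient_nonneg (a b : ℝ × ℝ) : Convex ℝ {p | 0 ≤ orient a b p} := by
  intro p hp q hq s t hs ht hst
  obtain rfl : s = 1 - t := by linarith
  have hlin : orient a b ((1 - t) • p + t • q) = (1 - t) * orient a b p + t * orient a b q := by
    simp only [orient, Prod.fst_add, Prod.snd_add, Prod.smul_fst, Prod.smul_snd, smul_eq_mul]
    ring
  rw [mem_ofPred_eq, hlin]
  exact add_nonneg (mul_nonneg hs hp) (mul_nonneg ht hq)

theorem volume_setOf_orient_eq_zero {a b : ℝ × ℝ} (hab : a ≠ b) :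
    volume {p | orient a b p = 0} = 0 := by
  let φ : ℝ × ℝ →ₗ[ℝ] ℝ := (b.1 - a.1) • LinearMap.snd ℝ ℝ ℝ - (b.2 - a.2) • LinearMap.fst ℝ ℝ ℝ
  have hline : {p | orient a b p = 0} = (AffineSubspace.mk' a (LinearMap.ker φ) : Set (ℝ × ℝ)) := by
    ext p
    simp [AffineSubspace.mem_mk', φ, orient]
  rw [hline]
  refine Measure.addHaar_affineSubspace _ _ fun htop => hab ?_
  have hn : a + (-(b.2 - a.2), b.1 - a.1) ∈ AffineSubspace.mk' a (LinearMap.ker φ) := htop ▸ trivial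
  simp only [AffineSubspace.mem_mk', vsub_eq_sub, add_sub_cancel_left, LinearMap.mem_ker,
    LinearMap.sub_apply, LinearMap.smul_apply, LinearMap.snd_apply, LinearMap.fst_apply,
    smul_eq_mul, φ] at hn
  have h₁ : b.1 - a.1 = 0 := by nlinarith [sq_nonneg (b.1 - a.1), sq_nonneg (b.2 - a.2)]
  have h₂ : b.2 - a.2 = 0 := by nlinarith [sq_nonneg (b.1 - a.1), sq_nonneg (b.2 - a.2)]
  exact Prod.ext (by linarith) (by linarith)

def triangleMap (v₀ v₁ v₂ : ℝ × ℝ) : ℝ × ℝ →ᵃ[ℝ] ℝ × ℝ :=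
  ((LinearMap.fst ℝ ℝ ℝ).smulRight (v₁ - v₀) + (LinearMap.snd ℝ ℝ ℝ).smulRight (v₂ - v₀)).toAffineMap
    + AffineMap.const ℝ (ℝ × ℝ) v₀

theorem triangleMap_apply (v₀ v₁ v₂ p : ℝ × ℝ) :
    triangleMap v₀ v₁ v₂ p = v₀ + p.1 • (v₁ - v₀) + p.2 • (v₂ - v₀) := by
  simp only [triangleMap, AffineMap.coe_add, LinearMap.coe_toAffineMap, AffineMap.coe_const,
    Pi.add_apply, LinearMap.add_apply, LinearMap.coe_smulRight, LinearMap.fst_apply,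
    LinearMap.snd_apply, Function.const_apply]
  abel

theorem convexHull_triple_eq_image (v₀ v₁ v₂ : ℝ × ℝ) :
    convexHull ℝ {v₀, v₁, v₂} = triangleMap v₀ v₁ v₂ '' stdTriangle := by
  apply (convexHull_min _ (convex_stdTriangle.affine_image _)).antisymm
  · rintro _ ⟨p, ⟨hp₁, hp₂, hp₃⟩, rfl⟩
    have hmem := (convex_convexHull ℝ {v₀, v₁, v₂}).sum_mem (t := Finset.univ)
      (w := ![1 - p.1 - p.2, p.1, p.2]) (z := ![v₀, v₁, v₂])
      (fun i _ => by fin_cases i <;> simp only [Fin.zero_eta, Fin.mk_one, Fin.reduceFinMk,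
        Matrix.cons_val] <;> linarith)
      (by rw [Fin.sum_univ_three]; simp only [Matrix.cons_val]; ring)
      (fun i _ => subset_convexHull ℝ _ (by fin_cases i <;> simp))
    convert hmem using 1
    rw [triangleMap_apply, Fin.sum_univ_three]
    simp only [Matrix.cons_val]
    module
  · simp only [insert_subset_iff, singleton_subset_iff]
    refine ⟨⟨(0, 0), ?_, ?_⟩, ⟨(1, 0), ?_, ?_⟩, ⟨(0, 1), ?_, ?_⟩⟩ <;>
      simp [stdTriangle, triangleMap_apply]

theorem mem_convexHull_triple_of_orient_nonneg {v₀ v₁ v₂ p : ℝ × ℝ}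
    (hv : 0 < orient v₀ v₁ v₂) (h₀₁ : 0 ≤ orient v₀ v₁ p) (h₁₂ : 0 ≤ orient v₁ v₂ p)
    (h₂₀ : 0 ≤ orient v₂ v₀ p) : p ∈ convexHull ℝ {v₀, v₁, v₂} := by
  have hsum : orient v₀ v₁ p + orient v₁ v₂ p + orient v₂ v₀ p = orient v₀ v₁ v₂ := by
    unfold orient; ring
  rw [convexHull_triple_eq_image]
  refine ⟨(orient v₂ v₀ p / orient v₀ v₁ v₂, orient v₀ v₁ p / orient v₀ v₁ v₂),
    ⟨by positivity, by positivity, ?_⟩, ?_⟩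
  · rw [← add_div, div_le_one hv]
    linarith
  · rw [triangleMap_apply]
    ext <;> simp only [Prod.fst_add, Prod.snd_add, Prod.smul_fst, Prod.smul_snd, smul_eq_mul,
      Prod.fst_sub, Prod.snd_sub] <;> field_simp <;> unfold orient <;> ring

theorem hasFDerivAt_triangleMap (v₀ v₁ v₂ p : ℝ × ℝ) :
    HasFDerivAt (triangleMap v₀ v₁ v₂) (triangleMap v₀ v₁ v₂).linear.toContinuousLinearMap p := by
  rw [(triangleMap v₀ v₁ v₂).decomp]
  exact (triangleMap v₀ v₁ v₂).linear.toContinuousLinearMap.hasFDerivAt.add_const _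

theorem det_triangleMap_linear (v₀ v₁ v₂ : ℝ × ℝ) :
    LinearMap.det (triangleMap v₀ v₁ v₂).linear = orient v₀ v₁ v₂ := by
  rw [← LinearMap.det_toMatrix (Module.Basis.finTwoProd ℝ), Matrix.det_fin_two]
  simp only [triangleMap, AffineMap.add_linear, LinearMap.toAffineMap_linear,
    AffineMap.const_linear, add_zero, LinearMap.toMatrix_apply, Module.Basis.finTwoProd_zero,
    Module.Basis.finTwoProd_one, LinearMap.add_apply, LinearMap.coe_smulRight, LinearMap.fst_apply,
    LinearMap.snd_apply, one_smul, zero_smul, zero_add, map_sub, Finsupp.coe_sub, Pi.sub_apply,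
    Module.Basis.coe_finTwoProd_repr, Matrix.cons_val_zero, Matrix.cons_val_one,
    Matrix.cons_val_fin_one, orient]
  ring

theorem triangleMap_injective {v₀ v₁ v₂ : ℝ × ℝ} (hv : orient v₀ v₁ v₂ ≠ 0) :
    Function.Injective (triangleMap v₀ v₁ v₂) := by
  have hunit : IsUnit (triangleMap v₀ v₁ v₂).linear := by
    rw [LinearMap.isUnit_iff_isUnit_det, det_triangleMap_linear]
    exact hv.isUnit
  rw [(triangleMap v₀ v₁ v₂).decomp]
  exact (add_left_injective _).comp ((Module.End.isUnit_iff _).mp hunit).injective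

theorem IsQuadratic.integral_convexHull_triple {u : ℝ × ℝ → ℝ} (hu : IsQuadratic u)
    {v₀ v₁ v₂ : ℝ × ℝ} (hv : orient v₀ v₁ v₂ ≠ 0) :
    ∫ p in convexHull ℝ {v₀, v₁, v₂}, u p = |orient v₀ v₁ v₂| / 6 *
      (u (midpoint ℝ v₀ v₁) + u (midpoint ℝ v₁ v₂) + u (midpoint ℝ v₂ v₀)) := by
  rw [convexHull_triple_eq_image, integral_image_eq_integral_abs_det_fderiv_smul volume
    isClosed_stdTriangle.measurableSet
    (fun p _ => (hasFDerivAt_triangleMap v₀ v₁ v₂ p).hasFDerivWithinAt)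
    (triangleMap_injective hv).injOn]
  simp only [ContinuousLinearMap.det, LinearMap.coe_toContinuousLinearMap, det_triangleMap_linear,
    smul_eq_mul, triangleMap_apply]
  rw [integral_const_mul, (hu.comp_add_smul v₀ (v₁ - v₀) (v₂ - v₀)).integral_stdTriangle]
  have h₀₁ : v₀ + (1 / 2 : ℝ) • (v₁ - v₀) + (0 : ℝ) • (v₂ - v₀) = midpoint ℝ v₀ v₁ := by
    rw [midpoint_eq_smul_add, invOf_eq_inv]; module
  have h₁₂ : v₀ + (1 / 2 : ℝ) • (v₁ - v₀) + (1 / 2 : ℝ) • (v₂ - v₀) = midpoint ℝ v₁ v₂ := by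
    rw [midpoint_eq_smul_add, invOf_eq_inv]; module
  have h₂₀ : v₀ + (0 : ℝ) • (v₁ - v₀) + (1 / 2 : ℝ) • (v₂ - v₀) = midpoint ℝ v₂ v₀ := by
    rw [midpoint_eq_smul_add, invOf_eq_inv]; module
  rw [h₀₁, h₁₂, h₂₀]
  ring

section Quadrilateral

variable {a b c d : ℝ × ℝ}

theorem convexHull_quadrilateral (habc : 0 < orient a b c) (hbcd : 0 ≤ orient b c d)
    (hcda : 0 < orient c d a) (hdab : 0 ≤ orient d a b) :
    convexHull ℝ {a, b, c, d} = convexHull ℝ {a, b, c} ∪ convexHull ℝ {c, d, a} := by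
  refine subset_antisymm ?_ (union_subset (convexHull_mono ?_) (convexHull_mono ?_))
  · let H := {p | 0 ≤ orient a b p} ∩ {p | 0 ≤ orient b c p} ∩ {p | 0 ≤ orient c d p} ∩
      {p | 0 ≤ orient d a p}
    have hconv : Convex ℝ H := (((convex_setOf_orient_nonneg a b).inter
      (convex_setOf_orient_nonneg b c)).inter (convex_setOf_orient_nonneg c d)).inter
        (convex_setOf_orient_nonneg d a)
    refine (convexHull_min ?_ hconv).trans ?_
    · simp only [insert_subset_iff, singleton_subset_iff, H, mem_inter_iff, mem_ofPred_eq,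
        orient_self_left, orient_self_right, le_refl, and_true, true_and]
      rw [← orient_rotate a b c, ← orient_rotate b c d, ← orient_rotate c d a,
        ← orient_rotate d a b]
      exact ⟨⟨habc.le, hcda.le⟩, ⟨hbcd, hdab⟩, ⟨habc.le, hcda.le⟩, hdab, hbcd⟩
    · rintro p ⟨⟨⟨hab, hbc⟩, hcd⟩, hda⟩
      rcases le_total 0 (orient c a p) with hca | hac
      · exact .inl (mem_convexHull_triple_of_orient_nonneg habc hab hbc hca)
      · refine .inr (mem_convexHull_triple_of_orient_nonneg hcda hcd hda ?_)
        rw [orient_swap]; linarith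
  all_goals intro x; simp only [mem_insert_iff, mem_singleton_iff]; tauto

theorem IsQuadratic.integral_convexHull_quadrilateral {u : ℝ × ℝ → ℝ} (hu : IsQuadratic u)
    (habc : 0 < orient a b c) (hbcd : 0 ≤ orient b c d) (hcda : 0 < orient c d a)
    (hdab : 0 ≤ orient d a b) :
    ∫ p in convexHull ℝ {a, b, c, d}, u p =
      orient a b c / 6 * (u (midpoint ℝ a b) + u (midpoint ℝ b c) + u (midpoint ℝ c a)) +
      orient c d a / 6 * (u (midpoint ℝ c d) + u (midpoint ℝ d a) + u (midpoint ℝ a c)) := by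
  have hcompact : ∀ x y z : ℝ × ℝ, IsCompact (convexHull ℝ {x, y, z}) := fun x y z =>
    (toFinite {x, y, z}).isCompact_convexHull (𝕜 := ℝ)
  have hdiag : convexHull ℝ {a, b, c} ∩ convexHull ℝ {c, d, a} ⊆ {p | orient c a p = 0} := by
    rintro p ⟨h₁, h₂⟩
    have hca : 0 ≤ orient c a p := convexHull_min (by
      simp [insert_subset_iff, orient_rotate c a b, habc.le]) (convex_setOf_orient_nonneg c a) h₁
    have hac : 0 ≤ orient a c p := convexHull_min (by
      simp [insert_subset_iff, orient_rotate a c d, hcda.le]) (convex_setOf_orient_nonneg a c) h₂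
    rw [orient_swap] at hac
    exact le_antisymm (by linarith) hca
  have hca : c ≠ a := by rintro rfl; simp at habc
  rw [convexHull_quadrilateral habc hbcd hcda hdab, setIntegral_union₀
    (measure_mono_null hdiag (volume_setOf_orient_eq_zero hca))
    (hcompact _ _ _).isClosed.measurableSet.nullMeasurableSet
    (hu.continuous.continuousOn.integrableOn_compact (hcompact _ _ _))
    (hu.continuous.continuousOn.integrableOn_compact (hcompact _ _ _)),
    hu.integral_convexHull_triple habc.ne', hu.integral_convexHull_triple hcda.ne',
    abs_of_pos habc, abs_of_pos hcda]

end Quadrilateral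

theorem isQuadratic_sub_mul_phi0 (α β b c m : ℝ) :
    IsQuadratic fun p => -(3 / 4) * p.2 ^ 2 + b * p.1 + c - m * phi0 α β p := by
  let k := 3 * m / (2 * (α ^ 2 + β ^ 2 + 3))
  refine ⟨3 * k, 0, -3 / 4 + 3 * k, b - 2 * β * k, -(2 * α * k), c - (4 + α ^ 2 + β ^ 2) * k,
    fun p => ?_⟩
  simp only [phi0, k]
  ring

/-- φ₁ and φ₃ are dual to the edge-average degrees of freedom on e₁ and e₃:
dᵢ(φ₁) = δ_{i1} and dᵢ(φ₃) = δ_{i3} for i = 0, …, 4. -/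
theorem phi1_phi3_dual (α β : ℝ) (hα : 0 < α) (hβ : 0 < β) (hαβ : α + β < 1) :
    quadAvg α β (phi1 α β) = 0 ∧
    edgeAvg (a1 α β) (a2 α β) (phi1 α β) = 1 ∧
    edgeAvg (a2 α β) (a3 α β) (phi1 α β) = 0 ∧
    edgeAvg (a3 α β) (a4 α β) (phi1 α β) = 0 ∧
    edgeAvg (a4 α β) (a1 α β) (phi1 α β) = 0 ∧
    quadAvg α β (phi3 α β) = 0 ∧
    edgeAvg (a1 α β) (a2 α β) (phi3 α β) = 0 ∧
    edgeAvg (a2 α β) (a3 α β) (phi3 α β) = 0 ∧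
    edgeAvg (a3 α β) (a4 α β) (phi3 α β) = 1 ∧
    edgeAvg (a4 α β) (a1 α β) (phi3 α β) = 0 := by
  have hQ : ∀ u, IsQuadratic u → ∫ p in Quad α β, u p = _ := fun u hu =>
    hu.integral_convexHull_quadrilateral (a := a1 α β) (b := a2 α β) (c := a3 α β) (d := a4 α β)
      (by simp only [orient, a1, a2, a3]; nlinarith) (by simp only [orient, a2, a3, a4]; nlinarith)
      (by simp only [orient, a3, a4, a1]; nlinarith) (by simp only [orient, a4, a1, a2]; nlinarith)
  have hφ₁ : IsQuadratic (phi1 α β) := isQuadratic_sub_mul_phi0 α β _ _ _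
  have hφ₃ : IsQuadratic (phi3 α β) := isQuadratic_sub_mul_phi0 α β _ _ _
  simp only [quadAvg, hQ _ hφ₁, hQ _ hφ₃, hφ₁.edgeAvg_eq_simpson, hφ₃.edgeAvg_eq_simpson]
  refine ⟨div_eq_zero_iff.mpr (.inl ?_), ?_, ?_, ?_, ?_, div_eq_zero_iff.mpr (.inl ?_), ?_, ?_, ?_,
    ?_⟩ <;>
    simp only [phi1, phi3, phi0, orient, a1, a2, a3, a4, midpoint_eq_smul_add, invOf_eq_inv,
      Prod.smul_mk, Prod.mk_add_mk, smul_eq_mul] <;>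
    field_simp <;> ring
end
end

section
/- Invertibility of the coefficient matrix defining Step 2 of the vector QLTZ interpolation (core of Lemma 3.1): let M be the 2×2 real matrix with rows (∫_Q (∂φ₀/∂η)·ξ dλ, ∫_Q (∂φ₀/∂ξ)·ξ dλ) and (∫_Q (∂φ₀/∂η)·η dλ, ∫_Q (∂φ₀/∂ξ)·η dλ). Then det(M)·(α² + β² + 3)² = 48α⁴ + 48β⁴ − 96α²β² − 96α² − 96β² − 144, and det(M) ≠ 0 (its absolute value is (−48α⁴ − 48β⁴ + 96α²β² + 96α² + 96β² + 144)/(α²+β²+3)²). Consequently, for every (μ₁, μ₂) ∈ ℝ² there exists a unique pair (c₁, c₂) ∈ ℝ² such that ∫_Q (c₁·∂φ₀/∂η + c₂·∂φ₀/∂ξ)·ξ dλ = μ₁ and ∫_Q (c₁·∂φ₀/∂η + c₂·∂φ₀/∂ξ)·η dλ = μ₂. -/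
open MeasureTheory

noncomputable section

/-- The coefficient matrix of Step 2 of the vector QLTZ interpolation: rows
(∫_Q (∂φ₀/∂η)·ξ, ∫_Q (∂φ₀/∂ξ)·ξ) and (∫_Q (∂φ₀/∂η)·η, ∫_Q (∂φ₀/∂ξ)·η). -/
def coeffMat (α β : ℝ) : Matrix (Fin 2) (Fin 2) ℝ :=
  !![∫ p in Quad α β, fderiv ℝ (phi0 α β) p (1, 0) * p.2,
     ∫ p in Quad α β, fderiv ℝ (phi0 α β) p (0, 1) * p.2;
     ∫ p in Quad α β, fderiv ℝ (phi0 α β) p (1, 0) * p.1,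
     ∫ p in Quad α β, fderiv ℝ (phi0 α β) p (0, 1) * p.1]

/-!
`Quad α β` is the image of the square `[-1, 1]²` under the bilinear map
`(s, t) ↦ (s + α s t, t + β s t)`, which is injective there with Jacobian `1 + β s + α t > 0`.
The change of variables formula therefore turns the moments of `Quad α β` up to order two into
polynomial integrals over the square. Since `∂φ₀/∂η = (3β - 9η) / D` and `∂φ₀/∂ξ = (3α - 9ξ) / D`
are affine, the entries of the matrix are combinations of these moments:
`D • M = !![-8αβ, 4α² - 12β² - 12; 4β² - 12α² - 12, -8αβ]`. Its determinant
`48 ((α² - β²)² - 2 (α² + β²) - 3) / D²` is negative because `α² + β² < 1`, and the unique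
solvability of the system is Cramer's rule.
-/

open Set

/-- The bilinear map sending the corners `(-1, 1), (-1, -1), (1, -1), (1, 1)` of the reference
square to the vertices `a₁, a₂, a₃, a₄` of `Quad α β`. -/
def quadMap (α β : ℝ) (q : ℝ × ℝ) : ℝ × ℝ :=
  (q.1 + α * (q.1 * q.2), q.2 + β * (q.1 * q.2))

def refSquare : Set (ℝ × ℝ) := Icc (-1) 1 ×ˢ Icc (-1) 1

def quadMapDeriv (α β : ℝ) (q : ℝ × ℝ) : ℝ × ℝ →L[ℝ] ℝ × ℝ :=
  LinearMap.toContinuousLinearMap <|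
    Matrix.toLin (Module.Basis.finTwoProd ℝ) (Module.Basis.finTwoProd ℝ)
      !![1 + α * q.2, α * q.1; β * q.2, 1 + β * q.1]

theorem det_quadMapDeriv (α β : ℝ) (q : ℝ × ℝ) :
    (quadMapDeriv α β q).det = 1 + β * q.1 + α * q.2 := by
  simp only [quadMapDeriv, ContinuousLinearMap.det, LinearMap.coe_toContinuousLinearMap,
    LinearMap.det_toLin, Matrix.det_fin_two_of]
  ring

theorem hasFDerivAt_quadMap (α β : ℝ) (q : ℝ × ℝ) :
    HasFDerivAt (quadMap α β) (quadMapDeriv α β q) q := by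
  have h := (hasFDerivAt_fst.add ((hasFDerivAt_fst.mul hasFDerivAt_snd).const_mul α)).prodMk
    (hasFDerivAt_snd.add ((hasFDerivAt_fst.mul hasFDerivAt_snd).const_mul β)) (x := q) (𝕜 := ℝ)
  refine h.congr_fderiv (ContinuousLinearMap.ext fun v => ?_)
  rw [quadMapDeriv, Matrix.toLin_finTwoProd_toContinuousLinearMap]
  simp only [ContinuousLinearMap.prod_apply, add_apply, smul_apply, ContinuousLinearMap.coe_fst',
    ContinuousLinearMap.coe_snd', smul_eq_mul, Prod.ext_iff]
  constructor <;> ring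

/-- `Quad α β` as the intersection of the four closed half-planes bounded by its edges. -/
def quadHalfPlanes (α β : ℝ) : Set (ℝ × ℝ) :=
  {p | 0 ≤ (1 - β) * (p.1 + 1) + α * p.2 ∧ 0 ≤ (1 + β) * (1 - p.1) + α * p.2 ∧
    0 ≤ (1 - α) * (p.2 + 1) + β * p.1 ∧ 0 ≤ (1 + α) * (1 - p.2) + β * p.1}

theorem convex_quadHalfPlanes (α β : ℝ) : Convex ℝ (quadHalfPlanes α β) := by
  rintro p ⟨hp₁, hp₂, hp₃, hp₄⟩ q ⟨hq₁, hq₂, hq₃, hq₄⟩ u v hu hv huv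
  obtain rfl : v = 1 - u := by linarith
  simp only [quadHalfPlanes, mem_ofPred_eq, Prod.fst_add, Prod.snd_add, Prod.smul_fst,
    Prod.smul_snd, smul_eq_mul]
  refine ⟨?_, ?_, ?_, ?_⟩
  · nlinarith [mul_nonneg hu hp₁, mul_nonneg hv hq₁]
  · nlinarith [mul_nonneg hu hp₂, mul_nonneg hv hq₂]
  · nlinarith [mul_nonneg hu hp₃, mul_nonneg hv hq₃]
  · nlinarith [mul_nonneg hu hp₄, mul_nonneg hv hq₄]

theorem quadMap_image_refSquare_subset (α β : ℝ) : quadMap α β '' refSquare ⊆ Quad α β := by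
  rintro _ ⟨⟨s, t⟩, ⟨⟨hs₁, hs₂⟩, ht₁, ht₂⟩, rfl⟩
  have hQ : Convex ℝ (Quad α β) := convex_convexHull ℝ _
  have mem : ∀ a ∈ ({a1 α β, a2 α β, a3 α β, a4 α β} : Set (ℝ × ℝ)), a ∈ Quad α β :=
    fun a ha => subset_convexHull ℝ _ ha
  -- bilinear interpolation: first along the edges `a₂a₃` and `a₁a₄`, then between them
  have h₂₃ := hQ (mem (a2 α β) (by simp)) (mem (a3 α β) (by simp))
    (by linarith : (0 : ℝ) ≤ (1 - s) / 2) (by linarith : (0 : ℝ) ≤ (1 + s) / 2) (by ring)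
  have h₁₄ := hQ (mem (a1 α β) (by simp)) (mem (a4 α β) (by simp))
    (by linarith : (0 : ℝ) ≤ (1 - s) / 2) (by linarith : (0 : ℝ) ≤ (1 + s) / 2) (by ring)
  convert hQ h₂₃ h₁₄ (by linarith : (0 : ℝ) ≤ (1 - t) / 2) (by linarith : (0 : ℝ) ≤ (1 + t) / 2)
    (by ring) using 1
  simp only [quadMap, a1, a2, a3, a4, Prod.smul_mk, smul_eq_mul, Prod.mk_add_mk, Prod.ext_iff]
  constructor <;> ring

section Geometry

variable {α β : ℝ} (hα : 0 ≤ α) (hβ : 0 ≤ β) (hαβ : α + β < 1)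
include hα hβ hαβ

theorem injOn_quadMap : InjOn (quadMap α β) refSquare := by
  rintro ⟨s, t⟩ ⟨⟨hs₁, hs₂⟩, ht₁, ht₂⟩ ⟨s', t'⟩ ⟨⟨hs₁', hs₂'⟩, ht₁', ht₂'⟩ h
  simp only [quadMap, Prod.mk.injEq] at h
  obtain ⟨h₁, h₂⟩ := h
  have hprod : s * t - s' * t' = 0 := by
    have hpos : 0 < 1 + α * t + β * s' := by nlinarith
    have key : (s * t - s' * t') * (1 + α * t + β * s') = 0 := by
      linear_combination t * h₁ + s' * h₂
    exact (mul_eq_zero.1 key).resolve_right hpos.ne'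
  simp only [Prod.mk.injEq]
  constructor
  · linear_combination h₁ - α * hprod
  · linear_combination h₂ - β * hprod

theorem quad_subset_quadHalfPlanes : Quad α β ⊆ quadHalfPlanes α β := by
  refine convexHull_min ?_ (convex_quadHalfPlanes α β)
  simp only [insert_subset_iff, singleton_subset_iff, quadHalfPlanes, mem_ofPred_eq, a1, a2, a3, a4]
  refine ⟨⟨?_, ?_, ?_, ?_⟩, ⟨?_, ?_, ?_, ?_⟩, ⟨?_, ?_, ?_, ?_⟩, ⟨?_, ?_, ?_, ?_⟩⟩ <;> nlinarith

theorem quadHalfPlanes_subset_quadMap_image : quadHalfPlanes α β ⊆ quadMap α β '' refSquare := by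
  rintro ⟨x, y⟩ ⟨h₁, h₂, h₃, h₄⟩
  dsimp only at h₁ h₂ h₃ h₄
  -- the second coordinate of `quadMap α β (x / (1 + α t), t)` is `y` iff `t` is a root of `f`
  set f : ℝ → ℝ := fun t => α * t ^ 2 + (1 + β * x - α * y) * t - y
  obtain ⟨t, ⟨ht₁, ht₂⟩, hft⟩ : 0 ∈ f '' Icc (-1) 1 :=
    intermediate_value_Icc (by norm_num) (by fun_prop : Continuous f).continuousOn
      ⟨by simp only [f]; linarith, by simp only [f]; linarith⟩
  simp only [f] at hft
  have hpos : 0 < 1 + α * t := by nlinarith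
  -- multiplied by `1 + α t`, the two remaining half-plane conditions factor through `f t = 0`
  have hleft : 0 ≤ x + (1 + α * t) :=
    nonneg_of_mul_nonneg_left (by nlinarith : 0 ≤ (x + (1 + α * t)) * (1 - β + α * t))
      (by nlinarith)
  have hright : 0 ≤ (1 + α * t) - x :=
    nonneg_of_mul_nonneg_left (by nlinarith : 0 ≤ ((1 + α * t) - x) * (1 + β + α * t))
      (by nlinarith)
  set s := x / (1 + α * t)
  have hs : s * (1 + α * t) = x := div_mul_cancel₀ x hpos.ne'
  have hys : (t + β * (s * t) - y) * (1 + α * t) = 0 := by linear_combination hft + β * t * hs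
  refine ⟨(s, t), ⟨⟨by nlinarith, by nlinarith⟩, ht₁, ht₂⟩, ?_⟩
  simp only [quadMap, Prod.mk.injEq]
  constructor
  · linear_combination hs
  · exact sub_eq_zero.1 ((mul_eq_zero.1 hys).resolve_right hpos.ne')

theorem quadMap_image_refSquare : quadMap α β '' refSquare = Quad α β :=
  (quadMap_image_refSquare_subset α β).antisymm
    ((quad_subset_quadHalfPlanes hα hβ hαβ).trans (quadHalfPlanes_subset_quadMap_image hα hβ hαβ))

end Geometry

theorem setIntegral_Icc_prod_Icc {E : Type*} [NormedAddCommGroup E] [NormedSpace ℝ E]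
    {a b c d : ℝ} (hab : a ≤ b) (hcd : c ≤ d) {f : ℝ × ℝ → E}
    (hf : IntegrableOn f (Icc a b ×ˢ Icc c d)) :
    ∫ q in Icc a b ×ˢ Icc c d, f q = ∫ s in a..b, ∫ t in c..d, f (s, t) := by
  rw [Measure.volume_eq_prod] at hf ⊢
  simp only [setIntegral_prod f hf, integral_Icc_eq_integral_Ioc,
    intervalIntegral.integral_of_le hab, intervalIntegral.integral_of_le hcd]

-- `intervalIntegral.integral_const_mul` does not fire on the eta-reduced integrand `(c * ·)`
theorem intervalIntegral_const_mul_id (a b c : ℝ) :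
    ∫ x in a..b, c * x = c * ((b ^ 2 - a ^ 2) / 2) := by
  rw [intervalIntegral.integral_const_mul, integral_id]

theorem fderiv_phi0_apply (α β : ℝ) (p v : ℝ × ℝ) :
    fderiv ℝ (phi0 α β) p v =
      ((3 * β - 9 * p.1) * v.1 + (3 * α - 9 * p.2) * v.2) / (α ^ 2 + β ^ 2 + 3) := by
  have hd : DifferentiableAt ℝ (phi0 α β) p := by unfold phi0; fun_prop
  rw [← hd.lineDeriv_eq_fderiv, lineDeriv]
  simp (disch := fun_prop) only [phi0, Prod.snd_add, Prod.smul_snd, smul_eq_mul, Prod.fst_add,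
    Prod.smul_fst, neg_mul, deriv_div_const, deriv.fun_neg', deriv_fun_mul, deriv_const', zero_mul,
    add_zero, deriv_fun_sub, deriv_fun_add, deriv_fun_pow, Nat.cast_ofNat, Nat.add_one_sub_one,
    pow_one, deriv_id'', one_mul, mul_zero, zero_add, sub_zero]
  field_simp
  ring

section Integrals

variable {α β : ℝ} (hα : 0 ≤ α) (hβ : 0 ≤ β) (hαβ : α + β < 1)
include hα hβ hαβ

theorem setIntegral_quad_eq_intervalIntegral {g : ℝ × ℝ → ℝ} (hg : Continuous g) :
    ∫ p in Quad α β, g p =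
      ∫ s in (-1)..1, ∫ t in (-1)..1, (1 + β * s + α * t) * g (quadMap α β (s, t)) := by
  have hmeas : MeasurableSet refSquare := measurableSet_Icc.prod measurableSet_Icc
  have hcont : Continuous (quadMap α β) :=
    continuous_iff_continuousAt.2 fun q => (hasFDerivAt_quadMap α β q).continuousAt
  rw [← quadMap_image_refSquare hα hβ hαβ, integral_image_eq_integral_abs_det_fderiv_smul volume
    hmeas (fun q _ => (hasFDerivAt_quadMap α β q).hasFDerivWithinAt) (injOn_quadMap hα hβ hαβ)]
  rw [setIntegral_congr_fun hmeas (g := fun q => (1 + β * q.1 + α * q.2) * g (quadMap α β q))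
    fun q ⟨⟨hs₁, _⟩, ht₁, _⟩ => by
      rw [det_quadMapDeriv, abs_of_nonneg (by nlinarith), smul_eq_mul]]
  exact setIntegral_Icc_prod_Icc (by norm_num) (by norm_num)
    (ContinuousOn.integrableOn_compact (isCompact_Icc.prod isCompact_Icc) (by fun_prop))

theorem setIntegral_quad_quadratic (a b c d e f : ℝ) :
    ∫ p in Quad α β, (a + b * p.1 + c * p.2 + d * p.1 ^ 2 + e * p.1 * p.2 + f * p.2 ^ 2) =
      4 * a + 4 / 3 * (b * β + c * α) + 4 / 3 * (d * (1 + α ^ 2) + e * α * β + f * (1 + β ^ 2)) := by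
  rw [setIntegral_quad_eq_intervalIntegral hα hβ hαβ (by fun_prop)]
  simp only [quadMap]
  ring_nf
  simp (disch := apply Continuous.intervalIntegrable; fun_prop) only [integral_pow,
    intervalIntegral.integral_add, intervalIntegral.integral_const_mul,
    intervalIntegral.integral_mul_const, intervalIntegral.integral_const, integral_id,
    intervalIntegral_const_mul_id]
  norm_num
  ring

theorem setIntegral_quad_fderiv_phi0_mul_snd (v : ℝ × ℝ) :
    ∫ p in Quad α β, fderiv ℝ (phi0 α β) p v * p.2 =
      (-8 * α * β * v.1 + (4 * α ^ 2 - 12 * β ^ 2 - 12) * v.2) / (α ^ 2 + β ^ 2 + 3) := by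
  set D := α ^ 2 + β ^ 2 + 3
  have hD : D ≠ 0 := by positivity
  calc ∫ p in Quad α β, fderiv ℝ (phi0 α β) p v * p.2
      = ∫ p in Quad α β, (0 + 0 * p.1 + (3 * β * v.1 + 3 * α * v.2) / D * p.2 + 0 * p.1 ^ 2 +
          -9 * v.1 / D * p.1 * p.2 + -9 * v.2 / D * p.2 ^ 2) := by
        congr 1 with p
        rw [fderiv_phi0_apply]
        ring
    _ = _ := by
        rw [setIntegral_quad_quadratic hα hβ hαβ]
        field_simp
        ring

theorem setIntegral_quad_fderiv_phi0_mul_fst (v : ℝ × ℝ) :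
    ∫ p in Quad α β, fderiv ℝ (phi0 α β) p v * p.1 =
      ((4 * β ^ 2 - 12 * α ^ 2 - 12) * v.1 - 8 * α * β * v.2) / (α ^ 2 + β ^ 2 + 3) := by
  set D := α ^ 2 + β ^ 2 + 3
  have hD : D ≠ 0 := by positivity
  calc ∫ p in Quad α β, fderiv ℝ (phi0 α β) p v * p.1
      = ∫ p in Quad α β, (0 + (3 * β * v.1 + 3 * α * v.2) / D * p.1 + 0 * p.2 +
          -9 * v.1 / D * p.1 ^ 2 + -9 * v.2 / D * p.1 * p.2 + 0 * p.2 ^ 2) := by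
        congr 1 with p
        rw [fderiv_phi0_apply]
        ring
    _ = _ := by
        rw [setIntegral_quad_quadratic hα hβ hαβ]
        field_simp
        ring

theorem det_coeffMat_mul_sq :
    (coeffMat α β).det * (α ^ 2 + β ^ 2 + 3) ^ 2 =
      48 * α ^ 4 + 48 * β ^ 4 - 96 * α ^ 2 * β ^ 2 - 96 * α ^ 2 - 96 * β ^ 2 - 144 := by
  have hD : α ^ 2 + β ^ 2 + 3 ≠ 0 := by positivity
  rw [coeffMat, Matrix.det_fin_two_of, setIntegral_quad_fderiv_phi0_mul_snd hα hβ hαβ,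
    setIntegral_quad_fderiv_phi0_mul_snd hα hβ hαβ, setIntegral_quad_fderiv_phi0_mul_fst hα hβ hαβ,
    setIntegral_quad_fderiv_phi0_mul_fst hα hβ hαβ]
  field_simp
  ring

theorem setIntegral_quad_fderiv_phi0_mul_eq_coeffMat (v : ℝ × ℝ) :
    (∫ p in Quad α β, fderiv ℝ (phi0 α β) p v * p.2) =
        v.1 * coeffMat α β 0 0 + v.2 * coeffMat α β 0 1 ∧
      (∫ p in Quad α β, fderiv ℝ (phi0 α β) p v * p.1) =
        v.1 * coeffMat α β 1 0 + v.2 * coeffMat α β 1 1 := by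
  simp only [coeffMat, Matrix.of_apply, Matrix.cons_val', Matrix.cons_val_zero,
    Matrix.cons_val_one, Matrix.empty_val', Matrix.cons_val_fin_one,
    setIntegral_quad_fderiv_phi0_mul_snd hα hβ hαβ, setIntegral_quad_fderiv_phi0_mul_fst hα hβ hαβ]
  constructor <;> ring

end Integrals

theorem quartic_neg_of_sq_add_sq_lt_three {α β : ℝ} (h : α ^ 2 + β ^ 2 < 3) :
    48 * α ^ 4 + 48 * β ^ 4 - 96 * α ^ 2 * β ^ 2 - 96 * α ^ 2 - 96 * β ^ 2 - 144 < 0 := by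
  -- it equals `48 ((α² - β²)² - 2 (α² + β²) - 3) ≤ 48 (α² + β² - 3) (α² + β² + 1)`
  nlinarith [mul_nonneg (sq_nonneg α) (sq_nonneg β), sq_nonneg α, sq_nonneg β]

theorem existsUnique_linear_system_fin_two {K : Type*} [Field K] (M : Matrix (Fin 2) (Fin 2) K)
    (hM : M.det ≠ 0) (μ₁ μ₂ : K) :
    ∃! c : K × K, c.1 * M 0 0 + c.2 * M 0 1 = μ₁ ∧ c.1 * M 1 0 + c.2 * M 1 1 = μ₂ := by
  rw [Matrix.det_fin_two] at hM
  set d := M 0 0 * M 1 1 - M 0 1 * M 1 0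
  refine ⟨((μ₁ * M 1 1 - μ₂ * M 0 1) / d, (μ₂ * M 0 0 - μ₁ * M 1 0) / d), ⟨?_, ?_⟩, ?_⟩
  · rw [div_mul_eq_mul_div, div_mul_eq_mul_div, ← add_div, div_eq_iff hM]
    ring
  · rw [div_mul_eq_mul_div, div_mul_eq_mul_div, ← add_div, div_eq_iff hM]
    ring
  · rintro ⟨c₁, c₂⟩ ⟨h₁, h₂⟩
    simp only [Prod.mk.injEq, eq_div_iff hM]
    constructor
    · linear_combination M 1 1 * h₁ - M 0 1 * h₂
    · linear_combination M 0 0 * h₂ - M 1 0 * h₁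

/-- Invertibility of the coefficient matrix defining Step 2 of the vector QLTZ
interpolation (core of Lemma 3.1): det(M)·D² = 48α⁴ + 48β⁴ − 96α²β² − 96α² − 96β² − 144
(D = α² + β² + 3), det(M) ≠ 0 with
|det(M)| = (−48α⁴ − 48β⁴ + 96α²β² + 96α² + 96β² + 144)/D², and consequently for every
(μ₁, μ₂) ∈ ℝ² there is a unique (c₁, c₂) matching the two weighted-integral data. -/
theorem coeffMat_invertible (α β : ℝ) (hα : 0 < α) (hβ : 0 < β) (hαβ : α + β < 1) :
    (coeffMat α β).det * (α ^ 2 + β ^ 2 + 3) ^ 2 =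
      48 * α ^ 4 + 48 * β ^ 4 - 96 * α ^ 2 * β ^ 2 - 96 * α ^ 2 - 96 * β ^ 2 - 144 ∧
    (coeffMat α β).det ≠ 0 ∧
    |(coeffMat α β).det| =
      (-48 * α ^ 4 - 48 * β ^ 4 + 96 * α ^ 2 * β ^ 2 + 96 * α ^ 2 + 96 * β ^ 2 + 144) /
        (α ^ 2 + β ^ 2 + 3) ^ 2 ∧
    (∀ μ₁ μ₂ : ℝ, ∃! c : ℝ × ℝ,
      (∫ p in Quad α β,
        (c.1 * fderiv ℝ (phi0 α β) p (1, 0) + c.2 * fderiv ℝ (phi0 α β) p (0, 1)) * p.2)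
          = μ₁ ∧
      (∫ p in Quad α β,
        (c.1 * fderiv ℝ (phi0 α β) p (1, 0) + c.2 * fderiv ℝ (phi0 α β) p (0, 1)) * p.1)
          = μ₂) := by
  have hdet := det_coeffMat_mul_sq hα.le hβ.le hαβ
  have hnum := quartic_neg_of_sq_add_sq_lt_three (by nlinarith : α ^ 2 + β ^ 2 < 3)
  have hD : 0 < (α ^ 2 + β ^ 2 + 3) ^ 2 := by positivity
  have hneg : (coeffMat α β).det < 0 := by nlinarith
  refine ⟨hdet, hneg.ne, ?_, fun μ₁ μ₂ => ?_⟩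
  · rw [abs_of_neg hneg, eq_div_iff hD.ne']
    linarith
  have hlin : ∀ (c : ℝ × ℝ) p, c.1 * fderiv ℝ (phi0 α β) p (1, 0) +
      c.2 * fderiv ℝ (phi0 α β) p (0, 1) = fderiv ℝ (phi0 α β) p c := by
    intro c p
    simp only [fderiv_phi0_apply]
    ring
  simp only [hlin, fun c => (setIntegral_quad_fderiv_phi0_mul_eq_coeffMat hα.le hβ.le hαβ c).1,
    fun c => (setIntegral_quad_fderiv_phi0_mul_eq_coeffMat hα.le hβ.le hαβ c).2]
  exact existsUnique_linear_system_fin_two _ hneg.ne μ₁ μ₂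
end
end
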